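/- The inverse branches of f satisfy: F_2(𝒰) ∩ S = ∅ and F_3(𝒰) ∩ S = ∅; F_0(S) ⊆ S and F_1(S) ⊆ S; and F_0(S) ∩ F_1(S) = ∅. -/
import Mathlib


noncomputable section

open Filter Topology

namespace TMH

/-- the trace map `f(x,y) = (x²(y−2)+2, x²y²(y−2)+2)` -/
def tmap (p : ℝ × ℝ) : ℝ × ℝ :=
  (p.1 ^ 2 * (p.2 - 2) + 2, p.1 ^ 2 * p.2 ^ 2 * (p.2 - 2) + 2)

/-- the strip `S = {(x,y) : |x| ≤ 1, y ≤ x² − 2}` -/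
def S : Set (ℝ × ℝ) := {p | |p.1| ≤ 1 ∧ p.2 ≤ p.1 ^ 2 - 2}

/-- the parabola `𝒫 = {(x,y) : y = x² − 2}` -/
def Par : Set (ℝ × ℝ) := {p | p.2 = p.1 ^ 2 - 2}

/-- the domain `𝒰` of the inverse branches `F_{±,+}` -/
def domU : Set (ℝ × ℝ) :=
  {p | p.1 < 2 ∧ p.2 < 2 ∧ 0 < p.2 - 4 * p.1 + 6} ∪
  {p | 2 < p.1 ∧ 2 < p.2 ∧ 0 < p.2 - 4 * p.1 + 6}

/-- the inverse branches `F_{ε,η}` of the trace map -/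
def Fb (e h : ℝ) (p : ℝ × ℝ) : ℝ × ℝ :=
  (e * Real.sqrt ((2 - p.1) / (2 - h * Real.sqrt ((2 - p.2) / (2 - p.1)))),
    h * Real.sqrt ((2 - p.2) / (2 - p.1)))

def F0 : ℝ × ℝ → ℝ × ℝ := Fb (-1) (-1)
def F1 : ℝ × ℝ → ℝ × ℝ := Fb 1 (-1)
def F2 : ℝ × ℝ → ℝ × ℝ := Fb (-1) 1
def F3 : ℝ × ℝ → ℝ × ℝ := Fb 1 1

end TMH
namespace TMH

lemma aux {p : ℝ × ℝ} (hp : p ∈ S) :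
    0 < (2 - p.1) / (2 - (-1) * Real.sqrt ((2 - p.2) / (2 - p.1))) ∧
    (2 - p.1) / (2 - (-1) * Real.sqrt ((2 - p.2) / (2 - p.1))) ≤ 1 ∧
    -Real.sqrt ((2 - p.2) / (2 - p.1)) ≤
      (2 - p.1) / (2 - (-1) * Real.sqrt ((2 - p.2) / (2 - p.1))) - 2 := by
  obtain ⟨hx, hy⟩ := hp
  set x := p.1
  set y := p.2
  have hx1 : x ≤ 1 := (abs_le.1 hx).2
  have hx2 : -1 ≤ x := (abs_le.1 hx).1
  have hxsq : x ^ 2 ≤ 1 := by nlinarith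
  have hy1 : y ≤ -1 := by nlinarith
  have h2x : (0:ℝ) < 2 - x := by linarith
  set t := Real.sqrt ((2 - y) / (2 - x)) with htdef
  have ht0 : 0 ≤ t := Real.sqrt_nonneg _
  have harg : (1:ℝ) ≤ (2 - y) / (2 - x) := by
    rw [le_div_iff₀ h2x]; nlinarith
  have ht1 : (1:ℝ) ≤ t := by
    rw [htdef, show (1:ℝ) = Real.sqrt 1 by simp]
    exact Real.sqrt_le_sqrt harg
  have htsq : t ^ 2 = (2 - y) / (2 - x) := Real.sq_sqrt (by linarith)
  have h2t : (0:ℝ) < 2 - (-1) * t := by linarith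
  refine ⟨div_pos h2x h2t, ?_, ?_⟩
  · rw [div_le_one h2t]; linarith
  · have hdiv : (2 + x) ≤ t ^ 2 := by
      rw [htsq, le_div_iff₀ h2x]; nlinarith
    rw [le_sub_iff_add_le, le_div_iff₀ h2t]
    nlinarith

lemma mem_and_sign {e : ℝ} (he : e ^ 2 = 1) {p : ℝ × ℝ} (hp : p ∈ S) :
    Fb e (-1) p ∈ S ∧ 0 < Real.sqrt ((2 - p.1) /
      (2 - (-1) * Real.sqrt ((2 - p.2) / (2 - p.1)))) := by
  obtain ⟨hA0, hA1, hA2⟩ := aux hp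
  have hs0 : 0 < Real.sqrt ((2 - p.1) /
      (2 - (-1) * Real.sqrt ((2 - p.2) / (2 - p.1)))) := Real.sqrt_pos.2 hA0
  refine ⟨⟨?_, ?_⟩, hs0⟩
  · show |e * Real.sqrt _| ≤ 1
    rw [abs_mul]
    have : |e| = 1 := by
      have := abs_pow e 2
      rw [he] at this
      nlinarith [abs_nonneg e, sq_abs e]
    rw [this, one_mul, abs_of_nonneg (Real.sqrt_nonneg _)]
    exact Real.sqrt_le_one.2 hA1
  · show (-1) * Real.sqrt ((2 - p.2) / (2 - p.1)) ≤ (e * Real.sqrt _) ^ 2 - 2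
    rw [mul_pow, he, one_mul, Real.sq_sqrt hA0.le]
    linarith


/-- **Lemma (behaviour of the inverse branches on the strip `S`).**
`F₂(𝒰) ∩ S = ∅`, `F₃(𝒰) ∩ S = ∅`, `F₀(S) ⊆ S`, `F₁(S) ⊆ S`, and
`F₀(S) ∩ F₁(S) = ∅`. -/
theorem inverse_branches_strip :
    F2 '' domU ∩ S = ∅ ∧ F3 '' domU ∩ S = ∅ ∧
    F0 '' S ⊆ S ∧ F1 '' S ⊆ S ∧ F0 '' S ∩ F1 '' S = ∅ := by

  have hneg : ∀ q ∈ S, q.2 < 0 := by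
    rintro ⟨a, b⟩ ⟨ha, hb⟩
    have : a ^ 2 ≤ 1 := by
      have h1 := (abs_le.1 ha).1; have h2 := (abs_le.1 ha).2; nlinarith
    simp only at *
    nlinarith
  have hpos : ∀ (e : ℝ) (p : ℝ × ℝ), 0 ≤ (Fb e 1 p).2 := by
    intro e p
    simp only [Fb, one_mul]
    exact Real.sqrt_nonneg _
  constructor
  · ext q
    simp only [Set.mem_inter_iff, Set.mem_image, Set.mem_empty_iff_false, iff_false]
    rintro ⟨⟨p, _, rfl⟩, hq⟩
    exact absurd (hneg _ hq) (not_lt.2 (hpos (-1) p))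
  constructor
  · ext q
    simp only [Set.mem_inter_iff, Set.mem_image, Set.mem_empty_iff_false, iff_false]
    rintro ⟨⟨p, _, rfl⟩, hq⟩
    exact absurd (hneg _ hq) (not_lt.2 (hpos 1 p))
  refine ⟨?_, ?_, ?_⟩
  · rintro q ⟨p, hp, rfl⟩
    exact (mem_and_sign (by norm_num) hp).1
  · rintro q ⟨p, hp, rfl⟩
    exact (mem_and_sign (by norm_num) hp).1
  · ext q
    simp only [Set.mem_inter_iff, Set.mem_image, Set.mem_empty_iff_false, iff_false]
    rintro ⟨⟨p, hp, hq0⟩, ⟨r, hr, hq1⟩⟩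
    have h0 := (mem_and_sign (e := -1) (by norm_num) hp).2
    have h1 := (mem_and_sign (e := 1) (by norm_num) hr).2
    have e0 : q.1 < 0 := by
      rw [← hq0]; show (-1 : ℝ) * Real.sqrt _ < 0; nlinarith
    have e1 : 0 < q.1 := by
      rw [← hq1]; show (0:ℝ) < 1 * Real.sqrt _; nlinarith
    linarith

end TMH
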